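/- Let f be differentiable and strongly convex with modulus C₃ > 0 on a convex set X, with minimizer x* ∈ X, and suppose ‖∇f(x)‖ ≤ C₂ for all x ∈ X. Then for any z ∈ X and step size γ with 0 ≤ C₃γ ≤ 1, the projected gradient step x = proj_X(z − γ∇f(z)) satisfies ‖x − x*‖² ≤ (1 − C₃γ)‖z − x*‖² + C₂²γ². -/

import Mathlib

/-! Projecting onto `X` does not increase the distance to `x* ∈ X`, so it suffices to bound the
unprojected step: `‖z - γ∇f(z) - x*‖² = ‖z - x*‖² - 2γ⟪∇f(z), z - x*⟫ + γ²‖∇f(z)‖²`. Strong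
convexity between `z` and `x*`, together with `f x* ≤ f z`, gives
`⟪∇f(z), z - x*⟫ ≥ (C₃/2)‖z - x*‖²`, and the last term is at most `C₂²γ²`. -/

open scoped RealInnerProductSpace

section

variable {E : Type*} [NormedAddCommGroup E] [InnerProductSpace ℝ E]

theorem norm_sub_sq_le_of_inner_le_zero {v p w : E} (h : ⟪v - p, w - p⟫ ≤ 0) :
    ‖p - w‖ ^ 2 ≤ ‖v - w‖ ^ 2 := by
  have hsplit : v - w = (v - p) - (w - p) := by abel
  have hexpand : ‖v - w‖ ^ 2 = ‖v - p‖ ^ 2 - 2 * ⟪v - p, w - p⟫ + ‖w - p‖ ^ 2 := by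
    rw [hsplit, norm_sub_sq_real]
  rw [hexpand, norm_sub_rev p w]
  nlinarith [sq_nonneg ‖v - p‖]

theorem Convex.norm_sub_sq_le_of_forall_norm_sub_le {X : Set E} (hX : Convex ℝ X) {v p w : E}
    (hp : p ∈ X) (hnearest : ∀ u ∈ X, ‖p - v‖ ≤ ‖u - v‖) (hw : w ∈ X) :
    ‖p - w‖ ^ 2 ≤ ‖v - w‖ ^ 2 := by
  have : Nonempty X := ⟨⟨p, hp⟩⟩
  have hinf : ‖v - p‖ = ⨅ u : X, ‖v - u‖ := by
    refine le_antisymm (le_ciInf fun u => ?_) ?_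
    · simpa only [norm_sub_rev v] using hnearest u u.2
    · exact ciInf_le ⟨0, by rintro _ ⟨u, rfl⟩; exact norm_nonneg _⟩ (⟨p, hp⟩ : X)
  exact norm_sub_sq_le_of_inner_le_zero
    ((norm_eq_iInf_iff_real_inner_le_zero hX hp).mp hinf w hw)

theorem norm_sub_smul_sub_sq_le {z x g : E} {c C γ : ℝ} (hγ : 0 ≤ γ)
    (hcorr : c / 2 * ‖z - x‖ ^ 2 ≤ ⟪g, z - x⟫) (hg : ‖g‖ ≤ C) :
    ‖z - γ • g - x‖ ^ 2 ≤ (1 - c * γ) * ‖z - x‖ ^ 2 + C ^ 2 * γ ^ 2 := by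
  have hsplit : z - γ • g - x = (z - x) - γ • g := by abel
  have hexpand : ‖z - γ • g - x‖ ^ 2 = ‖z - x‖ ^ 2 - 2 * γ * ⟪g, z - x⟫ + γ ^ 2 * ‖g‖ ^ 2 := by
    rw [hsplit, norm_sub_sq_real, real_inner_smul_right, real_inner_comm, norm_smul,
      Real.norm_of_nonneg hγ]
    ring
  have hgsq : ‖g‖ ^ 2 ≤ C ^ 2 := pow_le_pow_left₀ (norm_nonneg g) hg 2
  rw [hexpand]
  nlinarith [mul_le_mul_of_nonneg_left hcorr hγ, mul_le_mul_of_nonneg_left hgsq (sq_nonneg γ)]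

end

theorem stmt10_general (n : ℕ) (X : Set (EuclideanSpace ℝ (Fin n)))
    (hconv : Convex ℝ X)
    (f : EuclideanSpace ℝ (Fin n) → ℝ)
    (C₂ C₃ : ℝ) (hC₃ : 0 < C₃)
    (hsc : ∀ x ∈ X, ∀ y ∈ X,
      inner ℝ (gradient f x) (y - x) ≤ f y - f x - (C₃ / 2) * ‖y - x‖ ^ 2)
    (hgrad : ∀ x ∈ X, ‖gradient f x‖ ≤ C₂)
    (xstar : EuclideanSpace ℝ (Fin n)) (hxstar : xstar ∈ X)
    (hmin : ∀ y ∈ X, f xstar ≤ f y)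
    (proj : EuclideanSpace ℝ (Fin n) → EuclideanSpace ℝ (Fin n))
    (hmem : ∀ v, proj v ∈ X)
    (hminproj : ∀ v, ∀ w ∈ X, ‖proj v - v‖ ≤ ‖w - v‖)
    (γ : ℝ) (hγ0 : 0 ≤ C₃ * γ)
    (z : EuclideanSpace ℝ (Fin n)) (hz : z ∈ X) :
    ‖proj (z - γ • gradient f z) - xstar‖ ^ 2 ≤
      (1 - C₃ * γ) * ‖z - xstar‖ ^ 2 + C₂ ^ 2 * γ ^ 2 := by
  have hγ : 0 ≤ γ := nonneg_of_mul_nonneg_right hγ0 hC₃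
  have hcorr : C₃ / 2 * ‖z - xstar‖ ^ 2 ≤ ⟪gradient f z, z - xstar⟫ := by
    have hsc' := hsc z hz xstar hxstar
    rw [← neg_sub z xstar, inner_neg_right, norm_neg] at hsc'
    linarith [hmin z hz]
  calc ‖proj (z - γ • gradient f z) - xstar‖ ^ 2
      ≤ ‖z - γ • gradient f z - xstar‖ ^ 2 :=
        hconv.norm_sub_sq_le_of_forall_norm_sub_le (hmem _) (hminproj _) hxstar
    _ ≤ (1 - C₃ * γ) * ‖z - xstar‖ ^ 2 + C₂ ^ 2 * γ ^ 2 :=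
        norm_sub_smul_sub_sq_le hγ hcorr (hgrad z hz)

theorem stmt10 (n : ℕ) (X : Set (EuclideanSpace ℝ (Fin n)))
    (hne : X.Nonempty) (hcl : IsClosed X) (hconv : Convex ℝ X)
    (f : EuclideanSpace ℝ (Fin n) → ℝ) (hdiff : Differentiable ℝ f)
    (C₂ C₃ : ℝ) (hC₂ : 0 < C₂) (hC₃ : 0 < C₃)
    (hsc : ∀ x ∈ X, ∀ y ∈ X,
      inner ℝ (gradient f x) (y - x) ≤ f y - f x - (C₃ / 2) * ‖y - x‖ ^ 2)
    (hgrad : ∀ x ∈ X, ‖gradient f x‖ ≤ C₂)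
    (xstar : EuclideanSpace ℝ (Fin n)) (hxstar : xstar ∈ X)
    (hmin : ∀ y ∈ X, f xstar ≤ f y)
    (proj : EuclideanSpace ℝ (Fin n) → EuclideanSpace ℝ (Fin n))
    (hmem : ∀ v, proj v ∈ X)
    (hminproj : ∀ v, ∀ w ∈ X, ‖proj v - v‖ ≤ ‖w - v‖)
    (γ : ℝ) (hγ0 : 0 ≤ C₃ * γ) (hγ1 : C₃ * γ ≤ 1)
    (z : EuclideanSpace ℝ (Fin n)) (hz : z ∈ X) :
    ‖proj (z - γ • gradient f z) - xstar‖ ^ 2 ≤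
      (1 - C₃ * γ) * ‖z - xstar‖ ^ 2 + C₂ ^ 2 * γ ^ 2 :=
  stmt10_general n X hconv f C₂ C₃ hC₃ hsc hgrad xstar hxstar hmin proj hmem hminproj γ hγ0 z hz
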